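/- Let N(t) denote the number of zeros ρ of the Riemann zeta function with 0 < Im(ρ) ≤ t, let g(t) = (t/(2π))·log(t/(2πe)) + 7/8, and assume |N(t) - g(t)| ≤ log t for all t ≥ 14. Then for 14 ≤ t₁ < t₂, the sum of 1/Im(ρ) over nontrivial zeros ρ with t₁ ≤ Im(ρ) < t₂ is at most (1/(4π))·[log(t₂/(2π))² - log(t₁/(2π))²] + 5·log(t₁)/t₁. -/

import Mathlib

open Complex

/-- The set of nontrivial zeros of the Riemann zeta function with imaginary part in `(0, t]`. -/
def zetaZerosUpTo (t : ℝ) : Set ℂ :=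
  {ρ : ℂ | riemannZeta ρ = 0 ∧ 0 < ρ.im ∧ ρ.im ≤ t}

/-- The zero-counting function `N(t)`. -/
noncomputable def zetaN (t : ℝ) : ℝ := (zetaZerosUpTo t).ncard

/-- The main term `g(t) = (t/2π) log(t/(2πe)) + 7/8` in the Riemann–von Mangoldt formula. -/
noncomputable def zetaG (t : ℝ) : ℝ :=
  t / (2 * Real.pi) * Real.log (t / (2 * Real.pi * Real.exp 1)) + 7 / 8

/-!
Each zero contributes `1/γ = 1/t₂ + ∫_{t₁}^{t₂} 1_{γ<t} t⁻² dt`, so summing gives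
`∑ 1/γ = C(t₂)/t₂ + ∫_{t₁}^{t₂} C(t)/t² dt` for the counting function `C(t)` of zeros with
`t₁ ≤ γ < t`. Rosser's estimate bounds `C(t) = N(t) - N(t₁⁻)` by
`φ(t) = g(t) - g(t₁) + log t + log t₁`, and integrating by parts turns
`φ(t₂)/t₂ + ∫ φ/t²` into `φ(t₁)/t₁ + ∫ φ'(t)/t dt`, whose main part is
`∫ g'(t)/t dt = (log²(t₂/2π) - log²(t₁/2π))/4π`.
-/

open Set Filter Topology MeasureTheory intervalIntegral
open scoped Interval Finset Real

lemma intervalIntegrable_inv_sq {a b : ℝ} (ha : 0 < a) (hb : 0 < b) :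
    IntervalIntegrable (fun t : ℝ => (t ^ 2)⁻¹) volume a b :=
  intervalIntegrable_inv (fun _ ht => pow_ne_zero 2 ((lt_min ha hb).trans_le ht.1).ne')
    (continuous_pow 2).continuousOn

lemma hasDerivAt_neg_inv {t : ℝ} (ht : t ≠ 0) : HasDerivAt (fun t : ℝ => -t⁻¹) (t ^ 2)⁻¹ t := by
  simpa using (hasDerivAt_inv ht).fun_neg

lemma integral_inv_sq {a b : ℝ} (ha : 0 < a) (hab : a ≤ b) :
    ∫ t in a..b, (t ^ 2)⁻¹ = a⁻¹ - b⁻¹ := by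
  have hderiv : ∀ t ∈ [[a, b]], HasDerivAt (fun t : ℝ => -t⁻¹) (t ^ 2)⁻¹ t := fun t ht => by
    rw [uIcc_of_le hab] at ht
    exact hasDerivAt_neg_inv (ha.trans_le ht.1).ne'
  rw [integral_eq_sub_of_hasDerivAt hderiv (intervalIntegrable_inv_sq ha (ha.trans_le hab))]
  ring

lemma integral_indicator_Ioi_inv_sq {a b γ : ℝ} (ha : 0 < a) (hγ : γ ∈ Icc a b) :
    ∫ t in a..b, (Ioi γ).indicator (fun t => (t ^ 2)⁻¹) t = γ⁻¹ - b⁻¹ := by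
  rw [integral_of_le (hγ.1.trans hγ.2), MeasureTheory.integral_indicator measurableSet_Ioi,
    Measure.restrict_restrict measurableSet_Ioi, inter_comm, Ioc_inter_Ioi,
    max_eq_right hγ.1, ← integral_of_le hγ.2, integral_inv_sq (ha.trans_le hγ.1) hγ.2]

lemma sum_inv_le_add_integral_of_card_le {ι : Type*} (s : Finset ι) (γ : ι → ℝ) {a b : ℝ}
    {φ : ℝ → ℝ} (ha : 0 < a) (hab : a < b) (hγ : ∀ i ∈ s, γ i ∈ Ico a b)
    (hφ : ContinuousOn φ (Icc a b))
    (hcount : ∀ t ∈ Ioc a b, (#{i ∈ s | γ i < t} : ℝ) ≤ φ t) :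
    ∑ i ∈ s, (γ i)⁻¹ ≤ φ b / b + ∫ t in a..b, φ t / t ^ 2 := by
  set ind : ι → ℝ → ℝ := fun i => (Ioi (γ i)).indicator fun t => (t ^ 2)⁻¹
  have hinv_sq := intervalIntegrable_inv_sq ha (ha.trans hab)
  have hind : ∀ i ∈ s, IntervalIntegrable (ind i) volume a b := fun i _ => by
    rw [intervalIntegrable_iff] at hinv_sq ⊢
    exact hinv_sq.indicator measurableSet_Ioi
  have hsum_ind : ∀ t, ∑ i ∈ s, ind i t = #{i ∈ s | γ i < t} * (t ^ 2)⁻¹ := fun t => by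
    simp [ind, indicator_apply, Finset.sum_ite]
  have hφ_sq : IntervalIntegrable (fun t => φ t / t ^ 2) volume a b := by
    refine (hφ.div (continuous_pow 2).continuousOn fun t ht => ?_).intervalIntegrable_of_Icc hab.le
    exact pow_ne_zero 2 (ha.trans_le ht.1).ne'
  calc ∑ i ∈ s, (γ i)⁻¹
      = ∑ i ∈ s, (b⁻¹ + ∫ t in a..b, ind i t) :=
        Finset.sum_congr rfl fun i hi => by
          rw [integral_indicator_Ioi_inv_sq ha (Ico_subset_Icc_self (hγ i hi))]; ring
    _ = #s * b⁻¹ + ∫ t in a..b, ∑ i ∈ s, ind i t := by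
        rw [Finset.sum_add_distrib, Finset.sum_const, nsmul_eq_mul, integral_finsetSum hind]
    _ ≤ φ b / b + ∫ t in a..b, φ t / t ^ 2 := by
        gcongr ?_ + ?_
        · rw [div_eq_mul_inv, ← Finset.filter_true_of_mem fun i hi => (hγ i hi).2]
          exact mul_le_mul_of_nonneg_right (hcount b ⟨hab, le_rfl⟩)
            (inv_nonneg.2 (ha.trans hab).le)
        · refine integral_mono_on_of_le_Ioo hab.le
            (by simpa only [Finset.sum_fn] using IntervalIntegrable.sum s hind) hφ_sq fun t ht => ?_
          rw [hsum_ind, div_eq_mul_inv]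
          exact mul_le_mul_of_nonneg_right (hcount t (Ioo_subset_Ioc_self ht)) (by positivity)

lemma integral_div_sq_of_hasDerivAt {a b : ℝ} {φ φ' : ℝ → ℝ} (ha : 0 < a) (hab : a ≤ b)
    (hφ : ∀ t ∈ Icc a b, HasDerivAt φ (φ' t) t) (hφ' : IntervalIntegrable φ' volume a b) :
    ∫ t in a..b, φ t / t ^ 2 = φ a / a - φ b / b + ∫ t in a..b, φ' t / t := by
  have hinv : ∀ t ∈ [[a, b]], HasDerivAt (fun t : ℝ => -t⁻¹) (t ^ 2)⁻¹ t := fun t ht => by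
    rw [uIcc_of_le hab] at ht
    exact hasDerivAt_neg_inv (ha.trans_le ht.1).ne'
  have hparts := integral_mul_deriv_eq_deriv_mul (by rwa [uIcc_of_le hab]) hinv hφ'
    (intervalIntegrable_inv_sq ha (ha.trans_le hab))
  simp only [mul_neg, intervalIntegral.integral_neg, ← div_eq_mul_inv] at hparts
  rw [hparts]
  ring

lemma tsum_inv_le_add_integral_of_ncard_le {α : Type*} {S : Set α} (hS : S.Finite) (γ : α → ℝ)
    {a b : ℝ} {φ φ' : ℝ → ℝ} (ha : 0 < a) (hab : a < b) (hγ : ∀ x ∈ S, γ x ∈ Ico a b)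
    (hφ : ∀ t ∈ Icc a b, HasDerivAt φ (φ' t) t) (hφ' : IntervalIntegrable φ' volume a b)
    (hcount : ∀ t ∈ Ioc a b, ({x ∈ S | γ x < t}.ncard : ℝ) ≤ φ t) :
    ∑' x : S, (γ x)⁻¹ ≤ φ a / a + ∫ t in a..b, φ' t / t := by
  have hcard : ∀ t, #{x ∈ hS.toFinset | γ x < t} = {x ∈ S | γ x < t}.ncard := fun t => by
    rw [← Set.ncard_coe_finset, Finset.coe_filter]
    simp
  have htsum : ∑' x : S, (γ x)⁻¹ = ∑ x ∈ hS.toFinset, (γ x)⁻¹ := by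
    have h := Finset.tsum_subtype' hS.toFinset fun x => (γ x)⁻¹
    rwa [hS.coe_toFinset] at h
  have hφ_cont : ContinuousOn φ (Icc a b) := fun t ht => (hφ t ht).continuousAt.continuousWithinAt
  calc ∑' x : S, (γ x)⁻¹ = ∑ x ∈ hS.toFinset, (γ x)⁻¹ := htsum
    _ ≤ φ b / b + ∫ t in a..b, φ t / t ^ 2 :=
      sum_inv_le_add_integral_of_card_le _ _ ha hab (fun x hx => hγ x (hS.mem_toFinset.1 hx))
        hφ_cont fun t ht => by rw [hcard]; exact hcount t ht
    _ = φ a / a + ∫ t in a..b, φ' t / t := by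
      rw [integral_div_sq_of_hasDerivAt ha hab.le hφ hφ']
      ring

lemma log_div_two_pi_mul_exp_one {t : ℝ} (ht : 0 < t) :
    Real.log (t / (2 * π * Real.exp 1)) = Real.log (t / (2 * π)) - 1 := by
  rw [← div_div, Real.log_div (by positivity) (Real.exp_pos 1).ne', Real.log_exp]

lemma hasDerivAt_log_div_two_pi {t : ℝ} (ht : 0 < t) :
    HasDerivAt (fun t => Real.log (t / (2 * π))) t⁻¹ t := by
  convert ((hasDerivAt_id' t).div_const (2 * π)).log (by positivity) using 1
  field_simp

lemma hasDerivAt_zetaG {t : ℝ} (ht : 0 < t) :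
    HasDerivAt zetaG (Real.log (t / (2 * π)) / (2 * π)) t := by
  have h : HasDerivAt zetaG _ t := (((hasDerivAt_id' t).div_const (2 * π)).mul
    (((hasDerivAt_id' t).div_const (2 * π * Real.exp 1)).log (by positivity))).add_const (7 / 8)
  convert h using 1
  rw [log_div_two_pi_mul_exp_one ht]
  field_simp
  ring

lemma log_lt_zetaG {T : ℝ} (hT : 2 * π * Real.exp 4 ≤ T) : Real.log T < zetaG T := by
  have hT0 : 0 < T := lt_of_lt_of_le (by positivity) hT
  have hlog : 3 ≤ Real.log (T / (2 * π * Real.exp 1)) := by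
    rw [Real.le_log_iff_exp_le (by positivity), le_div_iff₀ (by positivity)]
    calc Real.exp 3 * (2 * π * Real.exp 1) = 2 * π * Real.exp 4 := by
          rw [mul_left_comm, ← Real.exp_add]; norm_num
      _ ≤ T := hT
  have hlogT : Real.log T ≤ T / Real.exp 1 := by
    have := Real.log_le_sub_one_of_pos (div_pos hT0 (Real.exp_pos 1))
    rw [Real.log_div hT0.ne' (Real.exp_pos 1).ne', Real.log_exp] at this
    linarith
  -- `2π < 3e`
  have hmain : T / Real.exp 1 < T / (2 * π) * 3 := by
    rw [div_lt_iff₀ (Real.exp_pos 1), div_mul_eq_mul_div, div_mul_eq_mul_div,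
      lt_div_iff₀ (by positivity)]
    nlinarith [Real.pi_lt_d2, Real.exp_one_gt_d9]
  have : T / (2 * π) * 3 ≤ T / (2 * π) * Real.log (T / (2 * π * Real.exp 1)) :=
    mul_le_mul_of_nonneg_left hlog (by positivity)
  unfold zetaG
  linarith

lemma zetaG_le_log {t : ℝ} (h₀ : Real.exp 1 ≤ t) (h₁ : t ≤ 2 * π * Real.exp 1) :
    zetaG t ≤ Real.log t := by
  have ht : 0 < t := (Real.exp_pos 1).trans_le h₀
  have hlog_nonpos : Real.log (t / (2 * π * Real.exp 1)) ≤ 0 :=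
    Real.log_nonpos (by positivity) ((div_le_one (by positivity)).2 h₁)
  have hlog_t : 1 ≤ Real.log t := by rwa [Real.le_log_iff_exp_le ht]
  have := mul_nonpos_of_nonneg_of_nonpos (by positivity : 0 ≤ t / (2 * π)) hlog_nonpos
  unfold zetaG
  linarith

-- `ncard` is `0` on an infinite set, which Rosser's estimate forbids as soon as `log T < g(T)`.
lemma zetaZerosUpTo_finite
    (hRosser : ∀ t : ℝ, 14 ≤ t → |zetaN t - zetaG t| ≤ Real.log t) (t : ℝ) :
    (zetaZerosUpTo t).Finite := by
  set T := max t (2 * π * Real.exp 4)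
  have hT : 2 * π * Real.exp 4 ≤ T := le_max_right _ _
  have hT14 : 14 ≤ T := by
    have := Real.add_one_le_exp 4
    nlinarith [Real.pi_gt_three]
  have hfin : (zetaZerosUpTo T).Finite := by
    by_contra hinf
    have hN : zetaN T = 0 := by simp [zetaN, Set.Infinite.ncard hinf]
    have := (abs_le.1 (hRosser T hT14)).1
    linarith [log_lt_zetaG hT]
  exact hfin.subset fun ρ hρ => ⟨hρ.1, hρ.2.1, hρ.2.2.trans (le_max_left _ _)⟩

def zetaZerosIco (a b : ℝ) : Set ℂ :=
  {ρ : ℂ | riemannZeta ρ = 0 ∧ a ≤ ρ.im ∧ ρ.im < b}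

lemma sep_im_lt_zetaZerosIco {a b t : ℝ} (htb : t ≤ b) :
    {ρ ∈ zetaZerosIco a b | ρ.im < t} = zetaZerosIco a t := by
  ext ρ
  simp only [zetaZerosIco, Set.mem_ofPred_eq]
  constructor
  · rintro ⟨⟨hζ, ha, -⟩, ht⟩
    exact ⟨hζ, ha, ht⟩
  · rintro ⟨hζ, ha, ht⟩
    exact ⟨⟨hζ, ha, ht.trans_le htb⟩, ht⟩

lemma ncard_zetaZerosIco_add_zetaN_le {u a t : ℝ} (hfin : (zetaZerosUpTo t).Finite)
    (hu : 0 ≤ u) (hua : u < a) (hat : a ≤ t) :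
    ((zetaZerosIco a t).ncard : ℝ) + zetaN u ≤ zetaN t := by
  have hsub : zetaZerosIco a t ∪ zetaZerosUpTo u ⊆ zetaZerosUpTo t := by
    rintro ρ (⟨hζ, ha, ht⟩ | ⟨hζ, hpos, hρu⟩)
    · exact ⟨hζ, by linarith, ht.le⟩
    · exact ⟨hζ, hpos, by linarith⟩
  have hdisj : Disjoint (zetaZerosIco a t) (zetaZerosUpTo u) :=
    Set.disjoint_left.2 fun ρ hρ hρ' => by linarith [hρ.2.1, hρ'.2.2]
  have hcard := Set.ncard_le_ncard hsub hfin
  rw [Set.ncard_union_eq hdisj (hfin.subset fun ρ hρ => hsub (Or.inl hρ))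
    (hfin.subset fun ρ hρ => hsub (Or.inr hρ))] at hcard
  unfold zetaN
  exact_mod_cast hcard

/-- Rosser's upper bound for the number of zeros with `a ≤ ρ.im < t`. -/
noncomputable def zetaCountBound (a t : ℝ) : ℝ :=
  zetaG t - zetaG a + Real.log t + Real.log a

lemma hasDerivAt_zetaCountBound (a : ℝ) {t : ℝ} (ht : 0 < t) :
    HasDerivAt (zetaCountBound a) (Real.log (t / (2 * π)) / (2 * π) + t⁻¹) t :=
  (((hasDerivAt_zetaG ht).sub_const _).add (Real.hasDerivAt_log ht.ne')).add_const _

lemma ncard_zetaZerosIco_le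
    (hRosser : ∀ t : ℝ, 14 ≤ t → |zetaN t - zetaG t| ≤ Real.log t) {a t : ℝ} (ha : 14 ≤ a)
    (hat : a ≤ t) : ((zetaZerosIco a t).ncard : ℝ) ≤ zetaCountBound a t := by
  have hfin := zetaZerosUpTo_finite hRosser t
  have hN_t := (abs_le.1 (hRosser t (ha.trans hat))).2
  unfold zetaCountBound
  rcases ha.eq_or_lt with rfl | ha
  · -- no `u ∈ [14, a)` is available, but `g(14) ≤ log 14` makes the trivial bound `N(t)` enough
    have hsmall : zetaG 14 ≤ Real.log 14 := zetaG_le_log (by linarith [Real.exp_one_lt_d9])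
      (by nlinarith [Real.pi_gt_three, Real.exp_one_gt_d9])
    have := ncard_zetaZerosIco_add_zetaN_le hfin le_rfl (by norm_num) hat
    have : 0 ≤ zetaN 0 := Nat.cast_nonneg _
    linarith
  -- Zeros with `ρ.im = a` are counted, so `N(a⁻)` is reached as a limit of `N(u)`, `u → a⁻`.
  have hbound : ∀ᶠ u in 𝓝[<] a,
      ((zetaZerosIco a t).ncard : ℝ) ≤ zetaG t + Real.log t - (zetaG u - Real.log u) := by
    filter_upwards [Ioo_mem_nhdsLT ha] with u hu
    have := ncard_zetaZerosIco_add_zetaN_le hfin (by linarith [hu.1]) hu.2 hat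
    have := (abs_le.1 (hRosser u hu.1.le)).1
    linarith
  have ha0 : 0 < a := by linarith
  have hlim : Tendsto (fun u => zetaG t + Real.log t - (zetaG u - Real.log u)) (𝓝[<] a)
      (𝓝 (zetaG t + Real.log t - (zetaG a - Real.log a))) :=
    ((continuousAt_const.sub ((hasDerivAt_zetaG ha0).continuousAt.sub
      (Real.continuousAt_log ha0.ne'))).tendsto).mono_left nhdsWithin_le_nhds
  linarith [ge_of_tendsto hlim hbound]

lemma continuousOn_log_div_two_pi_div_add_inv {a : ℝ} (ha : 0 < a) :
    ContinuousOn (fun t => Real.log (t / (2 * π)) / (2 * π) + t⁻¹) (Ici a) := fun t ht =>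
  have ht : 0 < t := ha.trans_le ht
  (((hasDerivAt_log_div_two_pi ht).continuousAt.div_const _).add
    (continuousAt_inv₀ ht.ne')).continuousWithinAt

lemma integral_log_div_two_pi_div_add_inv_div {a b : ℝ} (ha : 0 < a) (hab : a ≤ b) :
    ∫ t in a..b, (Real.log (t / (2 * π)) / (2 * π) + t⁻¹) / t
      = 1 / (4 * π) * (Real.log (b / (2 * π)) ^ 2 - Real.log (a / (2 * π)) ^ 2) + a⁻¹ - b⁻¹ := by
  have hderiv : ∀ t ∈ [[a, b]], HasDerivAt (fun t => Real.log (t / (2 * π)) ^ 2 / (4 * π) - t⁻¹)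
      ((Real.log (t / (2 * π)) / (2 * π) + t⁻¹) / t) t := fun t ht => by
    rw [uIcc_of_le hab] at ht
    have ht : 0 < t := ha.trans_le ht.1
    have h : HasDerivAt (fun t => Real.log (t / (2 * π)) ^ 2 / (4 * π) - t⁻¹) _ t :=
      (((hasDerivAt_log_div_two_pi ht).pow 2).div_const (4 * π)).sub (hasDerivAt_inv ht.ne')
    convert h using 1
    field_simp
    ring
  have hint : IntervalIntegrable (fun t => (Real.log (t / (2 * π)) / (2 * π) + t⁻¹) / t)
      volume a b :=
    (((continuousOn_log_div_two_pi_div_add_inv ha).mono Icc_subset_Ici_self).div continuousOn_id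
      fun t ht => (ha.trans_le ht.1).ne').intervalIntegrable_of_Icc hab
  rw [integral_eq_sub_of_hasDerivAt hderiv hint]
  ring

/-- Assuming Rosser's estimate `|N(t) - g(t)| ≤ log t` for `t ≥ 14`, the sum of `1/Im ρ`
over the zeros with `t₁ ≤ Im ρ < t₂` is bounded by
`(1/4π)[log(t₂/2π)² - log(t₁/2π)²] + 5 log(t₁)/t₁`. -/
theorem zeta_zero_reciprocal_sum_bound (t₁ t₂ : ℝ) (h₁ : 14 ≤ t₁) (h₁₂ : t₁ < t₂)
    (hRosser : ∀ t : ℝ, 14 ≤ t → |zetaN t - zetaG t| ≤ Real.log t) :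
    (∑' ρ : {ρ : ℂ // riemannZeta ρ = 0 ∧ t₁ ≤ ρ.im ∧ ρ.im < t₂},
        1 / ρ.val.im)
      ≤ 1 / (4 * Real.pi) *
          (Real.log (t₂ / (2 * Real.pi)) ^ 2 - Real.log (t₁ / (2 * Real.pi)) ^ 2)
        + 5 * Real.log t₁ / t₁ := by
  have ht₁ : 0 < t₁ := by linarith
  have hS : (zetaZerosIco t₁ t₂).Finite := (zetaZerosUpTo_finite hRosser t₂).subset
    fun ρ hρ => ⟨hρ.1, ht₁.trans_le hρ.2.1, hρ.2.2.le⟩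
  have hsum := tsum_inv_le_add_integral_of_ncard_le hS Complex.im ht₁ h₁₂ (fun ρ hρ => hρ.2)
    (fun t ht => hasDerivAt_zetaCountBound t₁ (ht₁.trans_le ht.1))
    (((continuousOn_log_div_two_pi_div_add_inv ht₁).mono
      Icc_subset_Ici_self).intervalIntegrable_of_Icc h₁₂.le)
    fun t ht => by
      rw [sep_im_lt_zetaZerosIco ht.2]
      exact ncard_zetaZerosIco_le hRosser h₁ ht.1.le
  rw [integral_log_div_two_pi_div_add_inv_div ht₁ h₁₂.le, zetaCountBound, sub_self,
    zero_add] at hsum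
  have hlog : 1 ≤ Real.log t₁ := by
    rw [Real.le_log_iff_exp_le ht₁]
    linarith [Real.exp_one_lt_d9]
  have hlog_terms : (Real.log t₁ + Real.log t₁) / t₁ + t₁⁻¹ ≤ 5 * Real.log t₁ / t₁ := by
    rw [div_add' _ _ _ ht₁.ne', div_le_div_iff_of_pos_right ht₁, inv_mul_cancel₀ ht₁.ne']
    linarith
  simp only [one_div] at hsum ⊢
  exact hsum.trans (by linarith [inv_pos.2 (ht₁.trans h₁₂)])
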